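/- arXiv:0906.2481 — 3 statements merged into one kernel-verified Lean document; each statement's English description precedes it below -/
import Mathlib

section
/- In the ring R = ℂ⟨x,y⟩/(x^5 - yxy, y^2 - xyx), the element x^6 is central. -/
noncomputable section

/-- The free ℂ-algebra on two generators. -/
abbrev F : Type := FreeAlgebra ℂ (Fin 2)

def Xf : F := FreeAlgebra.ι ℂ 0
def Yf : F := FreeAlgebra.ι ℂ 1

/-- The defining relations x^5 = yxy and y^2 = xyx. -/
inductive rel : F → F → Prop
  | r1 : rel (Xf ^ 5) (Yf * Xf * Yf)
  | r2 : rel (Yf ^ 2) (Xf * Yf * Xf)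

/-- R = ℂ⟨x,y⟩/(x^5 - yxy, y^2 - xyx). -/
abbrev R : Type := RingQuot rel

def x : R := RingQuot.mkRingHom rel Xf
def y : R := RingQuot.mkRingHom rel Yf

lemma h5 : (x : R) ^ 5 = y * x * y := by
  have := RingQuot.mkRingHom_rel rel.r1
  simpa [x, y, map_mul, map_pow] using this

lemma h2 : (y : R) ^ 2 = x * y * x := by
  have := RingQuot.mkRingHom_rel rel.r2
  simpa [x, y, map_mul, map_pow] using this

lemma key : Commute (x ^ 6) y := by
  show x ^ 6 * y = y * x ^ 6
  calc x ^ 6 * y = x * (x ^ 5) * y := by noncomm_ring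
    _ = x * (y * x * y) * y := by rw [h5]
    _ = x * y * x * (y ^ 2) := by noncomm_ring
    _ = x * y * x * (x * y * x) := by rw [h2]
    _ = (y ^ 2) * (x * y * x) := by rw [h2]
    _ = y * (y * x * y) * x := by noncomm_ring
    _ = y * (x ^ 5) * x := by rw [h5]
    _ = y * x ^ 6 := by noncomm_ring

theorem x_pow_six_central : ∀ r : R, Commute (x ^ 6) r := by
  intro r
  obtain ⟨f, rfl⟩ := RingQuot.mkRingHom_surjective rel r
  induction f using FreeAlgebra.induction with
  | grade0 c =>
      have : (RingQuot.mkRingHom rel) (algebraMap ℂ F c) = algebraMap ℂ R c := by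
        rw [← RingQuot.mkAlgHom_coe ℂ rel]
        exact (RingQuot.mkAlgHom ℂ rel).commutes c
      rw [this]
      exact (Algebra.commutes c (x ^ 6)).symm
  | grade1 i =>
      fin_cases i
      · exact ((Commute.refl x).pow_left 6)
      · exact key
  | mul a b ha hb =>
      rw [map_mul]; exact ha.mul_right hb
  | add a b ha hb =>
      rw [map_add]; exact ha.add_right hb
end
end

section
/- In the ring R = ℂ⟨x,y⟩/(x^5 - yxy, y^2 - xyx), setting w = y - x^2 and z = xy + ζ²yx - ζx³ where ζ is a primitive 6th root of unity, the relations zw = ζwz, xw = z - ζ²wx, and xz = ζzx - w² hold. -/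
noncomputable section

lemma hB : (y : R) * (x * y) = x * (x * (x * (x * x))) := by
  have h := RingQuot.mkRingHom_rel rel.r1
  simp only [map_pow, map_mul] at h
  rw [← x, ← y] at h
  rw [← mul_assoc, ← h]
  noncomm_ring

lemma hA : (y : R) * y = x * (y * x) := by
  have h := RingQuot.mkRingHom_rel rel.r2
  simp only [map_pow, map_mul] at h
  rw [← x, ← y, sq] at h
  rw [h, mul_assoc]

lemma hA' (t : R) : (y : R) * (y * t) = x * (y * (x * t)) := by
  rw [← mul_assoc, hA]; noncomm_ring

lemma hB' (t : R) : (y : R) * (x * (y * t)) = x * (x * (x * (x * (x * t)))) := by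
  have : (y : R) * (x * (y * t)) = (y * (x * y)) * t := by noncomm_ring
  rw [this, hB]; noncomm_ring

lemma zeta_sq (ζ : ℂ) (hζ : IsPrimitiveRoot ζ 6) : ζ ^ 2 = ζ - 1 := by
  have h6 : ζ ^ 6 = 1 := hζ.pow_eq_one
  have h3 : ζ ^ 3 = -1 := by
    have hsq : (ζ ^ 3) ^ 2 = 1 := by rw [← pow_mul]; exact h6
    rcases sq_eq_one_iff.mp hsq with h | h
    · exact absurd h (hζ.pow_ne_one_of_pos_of_lt (by norm_num) (by norm_num))
    · exact h
  have hne : ζ ≠ -1 := by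
    intro h
    have := hζ.pow_ne_one_of_pos_of_lt (l := 2) (by norm_num) (by norm_num)
    apply this; rw [h]; ring
  have hfac : (ζ + 1) * (ζ ^ 2 - ζ + 1) = 0 := by linear_combination h3
  rcases mul_eq_zero.mp hfac with h | h
  · exact absurd (show ζ = -1 by linear_combination h) hne
  · linear_combination h

theorem ore_relations (ζ : ℂ) (hζ : IsPrimitiveRoot ζ 6) :
    let w : R := y - x ^ 2
    let z : R := x * y + ζ ^ 2 • (y * x) - ζ • x ^ 3
    z * w = ζ • (w * z) ∧ x * w = z - ζ ^ 2 • (w * x) ∧ x * z = ζ • (z * x) - w ^ 2 := by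
  have h2 := zeta_sq ζ hζ
  intro w z
  refine ⟨?_, ?_, ?_⟩
  · show (x * y + ζ ^ 2 • (y * x) - ζ • x ^ 3) * (y - x ^ 2)
      = ζ • ((y - x ^ 2) * (x * y + ζ ^ 2 • (y * x) - ζ • x ^ 3))
    simp only [pow_succ, pow_zero, one_mul, mul_sub, sub_mul, mul_add, add_mul,
      smul_mul_assoc, mul_smul_comm, smul_sub, smul_add, smul_smul, mul_assoc]
    rw [hA, hB, hA' x]
    match_scalars <;>
      first
        | ring1
        | linear_combination h2
        | linear_combination ζ * h2
        | linear_combination (ζ + 1) * h2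
        | linear_combination -(ζ + 1) * h2
        | linear_combination (ζ - 1) * h2
        | linear_combination 2 * (ζ + 1) * h2
        | linear_combination -2 * (ζ + 1) * h2
        | linear_combination -ζ * h2
        | linear_combination -h2
  · show x * (y - x ^ 2)
      = (x * y + ζ ^ 2 • (y * x) - ζ • x ^ 3) - ζ ^ 2 • ((y - x ^ 2) * x)
    simp only [pow_succ, pow_zero, one_mul, mul_sub, sub_mul, mul_add, add_mul,
      smul_mul_assoc, mul_smul_comm, smul_sub, smul_add, smul_smul, mul_assoc]
    match_scalars <;>
      first
        | ring1
        | linear_combination h2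
        | linear_combination ζ * h2
        | linear_combination (ζ + 1) * h2
        | linear_combination -(ζ + 1) * h2
        | linear_combination (ζ - 1) * h2
        | linear_combination 2 * (ζ + 1) * h2
        | linear_combination -2 * (ζ + 1) * h2
        | linear_combination -ζ * h2
        | linear_combination -h2
  · show x * (x * y + ζ ^ 2 • (y * x) - ζ • x ^ 3)
      = ζ • ((x * y + ζ ^ 2 • (y * x) - ζ • x ^ 3) * x) - (y - x ^ 2) ^ 2
    simp only [pow_succ, pow_zero, one_mul, mul_sub, sub_mul, mul_add, add_mul,
      smul_mul_assoc, mul_smul_comm, smul_sub, smul_add, smul_smul, mul_assoc]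
    rw [hA]
    match_scalars <;>
      first
        | ring1
        | linear_combination h2
        | linear_combination ζ * h2
        | linear_combination (ζ + 1) * h2
        | linear_combination -(ζ + 1) * h2
        | linear_combination (ζ - 1) * h2
        | linear_combination 2 * (ζ + 1) * h2
        | linear_combination -2 * (ζ + 1) * h2
        | linear_combination -ζ * h2
        | linear_combination -h2
end
end

section
/- Let θ be the 4×4 integer matrix [[2,-1,-1,-1],[1,-1,-1,0],[1,0,-1,-1],[1,-1,0,-1]] and define Dₙ = (I + θ + ⋯ + θ^{n-1})·(1,1,0,1) for n ≥ 1, D₀ = 0. Then for all m ≥ 0 and 0 ≤ r ≤ 5, D_{6m+r} = D_r + m·(3,1,1,1). -/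
open Matrix

def θ : Matrix (Fin 4) (Fin 4) ℤ :=
  !![2, -1, -1, -1; 1, -1, -1, 0; 1, 0, -1, -1; 1, -1, 0, -1]

/-- D n = (I + θ + ⋯ + θ^(n-1))·(1,1,0,1); for n = 0 this is the zero vector. -/
def D (n : ℕ) : Fin 4 → ℤ := (∑ i ∈ Finset.range n, θ ^ i).mulVec ![1, 1, 0, 1]

lemma theta_fix : θ.mulVec ![3, 1, 1, 1] = ![3, 1, 1, 1] := by
  funext i
  fin_cases i <;> simp [θ, Matrix.mulVec, dotProduct, Fin.sum_univ_succ]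

lemma theta_pow_fix (n : ℕ) : (θ ^ n).mulVec ![3, 1, 1, 1] = ![3, 1, 1, 1] := by
  induction n with
  | zero => simp
  | succ k ih => rw [pow_succ, ← Matrix.mulVec_mulVec, theta_fix, ih]

lemma D_six : D 6 = ![3, 1, 1, 1] := by
  funext i
  fin_cases i <;>
    simp [D, θ, Finset.sum_range_succ, pow_succ, Matrix.mulVec, dotProduct,
      Fin.sum_univ_succ, Matrix.mul_apply, Matrix.one_apply] <;> decide

lemma D_step (n : ℕ) : D (n + 6) = D n + ![3, 1, 1, 1] := by
  have h : ∑ i ∈ Finset.range (n + 6), θ ^ i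
      = (∑ i ∈ Finset.range n, θ ^ i) + θ ^ n * ∑ i ∈ Finset.range 6, θ ^ i := by
    rw [Finset.sum_range_add, Finset.mul_sum]
    simp_rw [← pow_add]
  have : D (n + 6) = D n + (θ ^ n).mulVec ((∑ i ∈ Finset.range 6, θ ^ i).mulVec ![1, 1, 0, 1]) := by
    simp [D, h, Matrix.add_mulVec, Matrix.mulVec_mulVec]
  rw [this, show (∑ i ∈ Finset.range 6, θ ^ i).mulVec ![1, 1, 0, 1] = ![3, 1, 1, 1] from D_six,
    theta_pow_fix]

theorem D_six_m_add_r (m r : ℕ) (hr : r ≤ 5) :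
    D (6 * m + r) = D r + (m : ℤ) • ![3, 1, 1, 1] := by
  induction m with
  | zero => simp
  | succ k ih =>
      have : 6 * (k + 1) + r = (6 * k + r) + 6 := by ring
      rw [this, D_step, ih]
      push_cast
      rw [add_smul, one_smul]
      abel
end
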